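/- Let V be the ℚ-vector space with basis consisting of symbols Y1, Y2 and Z_n for n a natural number. The alternating bilinear bracket determined on basis elements by [Y1, Z_n] = [Y2, Z_n] = Z_{n+1}, [Z_n, Y1] = [Z_n, Y2] = −Z_{n+1}, [Y1, Y2] = [Y2, Y1] = 0, and [Z_m, Z_n] = 0 satisfies the Jacobi identity, and hence endows V with the structure of a Lie algebra over ℚ. -/

import Mathlib

/-- Basis symbols: `Y1`, `Y2`, and `Z n` for `n : ℕ`. -/
inductive B3 : Type
  | Y1 | Y2 | Z (n : ℕ)
deriving DecidableEq

/-- The ℚ-vector space with basis `B3`. -/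
abbrev V : Type := B3 →₀ ℚ

/-- Basis vectors. -/
noncomputable def b (i : B3) : V := Finsupp.single i 1

/-- The value of the bracket on a pair of basis elements. -/
noncomputable def brBasis : B3 → B3 → V
  | .Y1, .Z n => b (.Z (n + 1))
  | .Y2, .Z n => b (.Z (n + 1))
  | .Z n, .Y1 => -b (.Z (n + 1))
  | .Z n, .Y2 => -b (.Z (n + 1))
  | _, _ => 0

/-- The unique ℚ-bilinear extension of `brBasis` to `V`. -/
noncomputable def br (x y : V) : V :=
  x.sum fun i a => y.sum fun j c => (a * c) • brBasis i j

noncomputable def brL : V →ₗ[ℚ] V →ₗ[ℚ] V :=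
  Finsupp.lsum ℚ fun i => LinearMap.toSpanSingleton ℚ _
    (Finsupp.lsum ℚ fun j => LinearMap.toSpanSingleton ℚ V (brBasis i j))

lemma br_eq (x y : V) : br x y = brL x y := by
  simp only [br, brL, Finsupp.lsum_apply, LinearMap.toSpanSingleton_apply,
    Finsupp.sum, LinearMap.coe_sum, Finset.sum_apply, LinearMap.smul_apply]
  refine Finset.sum_congr rfl fun i _ => ?_
  simp [Finset.smul_sum, mul_smul]

lemma brL_bb (i j : B3) : brL (b i) (b j) = brBasis i j := by
  rw [← br_eq]
  simp [br, b, Finsupp.sum_single_index]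

lemma brBasis_jac (i j k : B3) :
    brL (b i) (brL (b j) (b k)) + brL (b k) (brL (b i) (b j))
      + brL (b j) (brL (b k) (b i)) = 0 := by
  cases i <;> cases j <;> cases k <;>
    simp [brL_bb, brBasis, map_neg, map_zero]

lemma skew (x y : V) : brL x y + brL y x = 0 := by
  have h : brL + brL.flip = 0 := by
    apply Finsupp.lhom_ext'
    intro i
    apply LinearMap.ext_ring
    apply Finsupp.lhom_ext'
    intro j
    apply LinearMap.ext_ring
    show brL (b i) (b j) + brL (b j) (b i) = 0
    cases i <;> cases j <;> simp [brL_bb, brBasis]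
  simpa using LinearMap.congr_fun (LinearMap.congr_fun h x) y

theorem stmt7 :
    (∀ x : V, br x x = 0) ∧
    (∀ A B C : V, br A (br B C) + br C (br A B) + br B (br C A) = 0) := by
  constructor
  · intro x
    rw [br_eq]
    induction x using Finsupp.induction_linear with
    | zero => simp
    | add f g hf hg =>
        have h := skew f g
        simp only [map_add, LinearMap.add_apply, hf, hg, zero_add, add_zero]
        rw [add_comm] at h
        exact h
    | single a r =>
        have e : (Finsupp.single a r : V) = r • b a := by simp [b, Finsupp.smul_single]
        rw [e]
        simp only [map_smul, LinearMap.smul_apply, brL_bb]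
        cases a <;> simp [brBasis]
  · intro A B C
    simp only [br_eq]
    induction A using Finsupp.induction_linear with
    | zero => simp
    | add f g hf hg =>
        have H := congrArg₂ (· + ·) hf hg
        simp only [add_zero] at H
        simp only [map_add, LinearMap.add_apply]
        refine Eq.trans ?_ H
        abel
    | single a r =>
      induction B using Finsupp.induction_linear with
      | zero => simp
      | add f g hf hg =>
          have H := congrArg₂ (· + ·) hf hg
          simp only [add_zero] at H
          simp only [map_add, LinearMap.add_apply]
          refine Eq.trans ?_ H
          abel
      | single a' r' =>
        induction C using Finsupp.induction_linear with
        | zero => simp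
        | add f g hf hg =>
            have H := congrArg₂ (· + ·) hf hg
            simp only [add_zero] at H
            simp only [map_add, LinearMap.add_apply]
            refine Eq.trans ?_ H
            abel
        | single a'' r'' =>
          have e : ∀ (c : B3) (s : ℚ), (Finsupp.single c s : V) = s • b c := by
            intro c s; simp [b, Finsupp.smul_single]
          rw [e a r, e a' r', e a'' r'']
          simp only [map_smul, LinearMap.smul_apply, smul_smul]
          rw [show r'' * r' * r = r' * r * r'' by ring,
            show r * r'' * r' = r' * r * r'' by ring,
            ← smul_add, ← smul_add, brBasis_jac a a' a'', smul_zero]
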